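/- Fix a real number R > 0. Define p_Φ(φ) = (1/(2π))·e^{−R²} + (R/√(4π))·cos(φ)·e^{−R² sin²(φ)}·erfc(−R cos(φ)), the mean cosine m(R) := ∫_{−π}^{π} cos(φ)·p_Φ(φ) dφ, and the modified Bessel function I₀(α) := (1/(2π))·∫_{−π}^{π} e^{α cos θ} dθ. Then −log(I₀(R²)) + R²·m(R) ≥ (1/2)·log(R²) − 1. -/

import Mathlib

open Real MeasureTheory intervalIntegral

/-- The complementary error function `erfc z = (2/√π) ∫_z^∞ e^{-t²} dt`. -/
noncomputable def erfc (z : ℝ) : ℝ := (2 / Real.sqrt π) * ∫ t in Set.Ioi z, Real.exp (-t ^ 2)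

/-- The modified Bessel function of the first kind of order zero,
`I₀(α) = (1/(2π)) ∫_{-π}^{π} e^{α cos θ} dθ`. -/
noncomputable def besselI0 (α : ℝ) : ℝ :=
  (1 / (2 * π)) * ∫ θ in (-π)..π, Real.exp (α * Real.cos θ)

lemma gauss_integrable : Integrable (fun t:ℝ => Real.exp (-t^2)) := by
  have := integrable_exp_neg_mul_sq (b := 1) one_pos
  simpa using this

lemma gauss_split (x : ℝ) :
    (∫ t in Set.Ioi (-x), Real.exp (-t^2)) + ∫ t in Set.Ioi x, Real.exp (-t^2)
      = Real.sqrt π := by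
  have h1 : (∫ t in Set.Ioi (-x), Real.exp (-t^2)) = ∫ t in Set.Iic x, Real.exp (-t^2) := by
    have := integral_comp_neg_Ioi (-x) (fun t => Real.exp (-t^2))
    simp only [neg_sq, neg_neg] at this
    rw [← this]
  rw [h1, integral_Iic_add_Ioi gauss_integrable.integrableOn gauss_integrable.integrableOn]
  simpa using integral_gaussian 1

lemma erfc_add (x : ℝ) : erfc (-x) + erfc x = 2 := by
  have hπ : Real.sqrt π ≠ 0 := Real.sqrt_ne_zero'.2 pi_pos
  unfold erfc
  rw [← mul_add, gauss_split x]
  field_simp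

lemma erfc_eq (z : ℝ) : erfc z = (2 / Real.sqrt π) *
    ((∫ t in Set.Ioi (0:ℝ), Real.exp (-t^2)) - ∫ t in (0:ℝ)..z, Real.exp (-t^2)) := by
  unfold erfc
  congr 1
  have hiv : (∫ t in Set.Iic z, Real.exp (-t^2)) - (∫ t in Set.Iic (0:ℝ), Real.exp (-t^2))
      = ∫ t in (0:ℝ)..z, Real.exp (-t^2) :=
    intervalIntegral.integral_Iic_sub_Iic gauss_integrable.integrableOn
      gauss_integrable.integrableOn
  have h0 : (∫ t in Set.Iic (0:ℝ), Real.exp (-t^2)) + ∫ t in Set.Ioi (0:ℝ), Real.exp (-t^2)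
      = ∫ t : ℝ, Real.exp (-t^2) :=
    integral_Iic_add_Ioi gauss_integrable.integrableOn gauss_integrable.integrableOn
  have hz : (∫ t in Set.Iic z, Real.exp (-t^2)) + ∫ t in Set.Ioi z, Real.exp (-t^2)
      = ∫ t : ℝ, Real.exp (-t^2) :=
    integral_Iic_add_Ioi gauss_integrable.integrableOn gauss_integrable.integrableOn
  linarith

lemma erfc_continuous : Continuous erfc := by
  have : Continuous fun z : ℝ => (2 / Real.sqrt π) *
      ((∫ t in Set.Ioi (0:ℝ), Real.exp (-t^2)) - ∫ t in (0:ℝ)..z, Real.exp (-t^2)) := by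
    exact continuous_const.mul (continuous_const.sub
      (gauss_integrable.continuous_primitive 0))
  convert this using 1
  funext z
  exact erfc_eq z

section Sym
variable (R : ℝ)

noncomputable def gR (R : ℝ) : ℝ → ℝ := fun φ => Real.cos φ ^ 2 * Real.exp (-R^2 * Real.sin φ ^ 2)

lemma gR_cont : Continuous (gR R) := by unfold gR; fun_prop

lemma gR_shift (x : ℝ) : gR R (x - π) = gR R x := by
  unfold gR
  rw [Real.cos_sub_pi, Real.sin_sub_pi, neg_sq, neg_sq]

noncomputable def hR (R : ℝ) : ℝ → ℝ := fun φ => gR R φ * erfc (-(R * Real.cos φ))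

lemma hR_cont : Continuous (hR R) := by
  unfold hR
  exact (gR_cont R).mul (erfc_continuous.comp (by fun_prop))

lemma hR_shift (x : ℝ) : hR R (x - π) = gR R x * erfc (R * Real.cos x) := by
  unfold hR
  rw [gR_shift, Real.cos_sub_pi, mul_neg, neg_neg]

lemma sym_eq : (∫ φ in (-π)..π, hR R φ) = ∫ φ in (-π)..π, gR R φ := by
  have hint : ∀ (f : ℝ → ℝ), Continuous f → ∀ a b : ℝ, IntervalIntegrable f volume a b :=
    fun f hf a b => hf.intervalIntegrable a b
  have h1 : (∫ φ in (-π)..(0:ℝ), hR R φ) = ∫ x in (0:ℝ)..π, gR R x * erfc (R * Real.cos x) := by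
    have e1 := intervalIntegral.integral_comp_sub_right (a := 0) (b := π) (fun x => hR R x) π
    simp only [zero_sub, sub_self] at e1
    rw [← e1]
    exact intervalIntegral.integral_congr (fun x _ => hR_shift R x)
  have h2 : (∫ φ in (-π)..(0:ℝ), gR R φ) = ∫ x in (0:ℝ)..π, gR R x := by
    have e1 := intervalIntegral.integral_comp_sub_right (a := 0) (b := π) (fun x => gR R x) π
    simp only [zero_sub, sub_self] at e1
    rw [← e1]
    exact intervalIntegral.integral_congr (fun x _ => gR_shift R x)
  have hsplit : (∫ φ in (-π)..π, hR R φ)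
      = (∫ φ in (-π)..(0:ℝ), hR R φ) + ∫ φ in (0:ℝ)..π, hR R φ :=
    (intervalIntegral.integral_add_adjacent_intervals
      (hint _ (hR_cont R) _ _) (hint _ (hR_cont R) _ _)).symm
  have hsplit2 : (∫ φ in (-π)..π, gR R φ)
      = (∫ φ in (-π)..(0:ℝ), gR R φ) + ∫ φ in (0:ℝ)..π, gR R φ :=
    (intervalIntegral.integral_add_adjacent_intervals
      (hint _ (gR_cont R) _ _) (hint _ (gR_cont R) _ _)).symm
  have hcomb : (∫ x in (0:ℝ)..π, gR R x * erfc (R * Real.cos x)) + ∫ φ in (0:ℝ)..π, hR R φ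
      = ∫ x in (0:ℝ)..π, gR R x * 2 := by
    rw [← intervalIntegral.integral_add (hint _ (by
      exact (gR_cont R).mul (erfc_continuous.comp (by fun_prop))) _ _) (hint _ (hR_cont R) _ _)]
    refine intervalIntegral.integral_congr (fun x _ => ?_)
    unfold hR
    rw [← mul_add, add_comm, erfc_add]
  rw [hsplit, hsplit2, h1, h2, hcomb]
  rw [intervalIntegral.integral_mul_const]
  ring
end Sym

lemma m_val (R : ℝ) :
    (∫ φ in (-π)..π, Real.cos φ *
      ((1 / (2 * π)) * Real.exp (-R ^ 2) +
        (R / Real.sqrt (4 * π)) * Real.cos φ * Real.exp (-R ^ 2 * Real.sin φ ^ 2) *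
          erfc (-(R * Real.cos φ))))
    = (R / Real.sqrt (4 * π)) * ∫ φ in (-π)..π, gR R φ := by
  have hpt : ∀ φ : ℝ, Real.cos φ *
      ((1 / (2 * π)) * Real.exp (-R ^ 2) +
        (R / Real.sqrt (4 * π)) * Real.cos φ * Real.exp (-R ^ 2 * Real.sin φ ^ 2) *
          erfc (-(R * Real.cos φ)))
      = (1 / (2 * π)) * Real.exp (-R ^ 2) * Real.cos φ
        + (R / Real.sqrt (4 * π)) * hR R φ := by
    intro φ
    unfold hR gR
    ring
  rw [intervalIntegral.integral_congr (fun φ _ => hpt φ)]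
  rw [intervalIntegral.integral_add (g := fun φ : ℝ => (R / Real.sqrt (4 * π)) * hR R φ)
    ((by fun_prop : Continuous fun φ : ℝ => (1 / (2 * π)) * Real.exp (-R ^ 2) * Real.cos φ).intervalIntegrable _ _)
    ((continuous_const.mul (hR_cont R)).intervalIntegrable _ _)]
  rw [intervalIntegral.integral_const_mul, intervalIntegral.integral_const_mul,
    integral_cos, sym_eq]
  simp

lemma gR_reflect (R x : ℝ) : gR R (π - x) = gR R x := by
  unfold gR
  rw [Real.cos_pi_sub, Real.sin_pi_sub, neg_sq]

lemma gR_full (R : ℝ) :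
    (∫ φ in (-π)..π, gR R φ) = 4 * ∫ φ in (0:ℝ)..(π/2), gR R φ := by
  have hint : ∀ a b : ℝ, IntervalIntegrable (gR R) volume a b :=
    fun a b => (gR_cont R).intervalIntegrable a b
  have h2 : (∫ φ in (-π)..(0:ℝ), gR R φ) = ∫ x in (0:ℝ)..π, gR R x := by
    have e1 := intervalIntegral.integral_comp_sub_right (a := 0) (b := π) (fun x => gR R x) π
    simp only [zero_sub, sub_self] at e1
    rw [← e1]
    exact intervalIntegral.integral_congr (fun x _ => gR_shift R x)
  have h3 : (∫ φ in (π/2)..π, gR R φ) = ∫ x in (0:ℝ)..(π/2), gR R x := by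
    have e1 := intervalIntegral.integral_comp_sub_left (a := 0) (b := π/2) (fun x => gR R x) π
    have : π - π / 2 = π / 2 := by ring
    rw [this, sub_zero] at e1
    rw [← e1]
    exact intervalIntegral.integral_congr (fun x _ => gR_reflect R x)
  have hsplit : (∫ φ in (-π)..π, gR R φ)
      = (∫ φ in (-π)..(0:ℝ), gR R φ) + ∫ φ in (0:ℝ)..π, gR R φ :=
    (intervalIntegral.integral_add_adjacent_intervals (hint _ _) (hint _ _)).symm
  have hsplit2 : (∫ φ in (0:ℝ)..π, gR R φ)
      = (∫ φ in (0:ℝ)..(π/2), gR R φ) + ∫ φ in (π/2)..π, gR R φ :=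
    (intervalIntegral.integral_add_adjacent_intervals (hint _ _) (hint _ _)).symm
  rw [hsplit, h2, hsplit2, h3]
  ring

lemma exp_decay_int (k c : ℝ) (hk : 0 < k) :
    (∫ x in Set.Ioi c, Real.exp (-k*x)) = Real.exp (-k*c)/k := by
  have hderiv : ∀ x ∈ Set.Ici c, HasDerivAt (fun x => -Real.exp (-k*x)/k)
      (Real.exp (-k*x)) x := by
    intro x _
    have h1 : HasDerivAt (fun x : ℝ => -k*x) (-k) x := by
      simpa using (hasDerivAt_id x).const_mul (-k)
    have h2 := (h1.exp.neg).div_const k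
    exact h2.congr_deriv (by field_simp)
  have htend : Filter.Tendsto (fun x => -Real.exp (-k*x)/k) Filter.atTop (nhds 0) := by
    have : Filter.Tendsto (fun x : ℝ => Real.exp (-k*x)) Filter.atTop (nhds 0) := by
      simpa using Real.tendsto_exp_comp_nhds_zero.2
        (Filter.Tendsto.const_mul_atTop_of_neg (neg_neg_iff_pos.2 hk) Filter.tendsto_id)
    simpa using (this.neg.div_const k)
  have := MeasureTheory.integral_Ioi_of_hasDerivAt_of_tendsto' hderiv
    ((exp_neg_integrableOn_Ioi c hk)) htend
  rw [this]
  field_simp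
  ring

lemma gauss_a_integrable {a : ℝ} (ha : 0 < a) :
    Integrable (fun x : ℝ => Real.exp (-a*x^2)) := integrable_exp_neg_mul_sq ha

lemma gauss_tail {a c : ℝ} (ha : 0 < a) (hc : 0 < c) :
    (∫ x in Set.Ioi c, Real.exp (-a*x^2)) ≤ Real.exp (-a*c^2)/(a*c) := by
  have hmono : ∀ x ∈ Set.Ioi c, Real.exp (-a*x^2) ≤ Real.exp (-(a*c)*x) := by
    intro x hx
    have hx' : c < x := hx
    apply Real.exp_le_exp.2
    nlinarith [mul_nonneg (mul_nonneg ha.le (le_of_lt (hc.trans hx'))) (sub_nonneg.2 hx'.le)]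
  have h1 : (∫ x in Set.Ioi c, Real.exp (-a*x^2)) ≤ ∫ x in Set.Ioi c, Real.exp (-(a*c)*x) := by
    apply MeasureTheory.setIntegral_mono_on (gauss_a_integrable ha).integrableOn
      (exp_neg_integrableOn_Ioi c (by positivity)) measurableSet_Ioi hmono
  have h2 : (∫ x in Set.Ioi c, Real.exp (-(a*c)*x)) = Real.exp (-a*c^2)/(a*c) := by
    rw [exp_decay_int (a*c) c (by positivity)]
    ring_nf
  linarith

lemma gauss_Ic_split {a c : ℝ} (ha : 0 < a) (hc : 0 < c) :
    (∫ x in (0:ℝ)..c, Real.exp (-a*x^2))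
      = Real.sqrt (π/a)/2 - ∫ x in Set.Ioi c, Real.exp (-a*x^2) := by
  have hu : (∫ x in Set.Ioc 0 c, Real.exp (-a*x^2)) + (∫ x in Set.Ioi c, Real.exp (-a*x^2))
      = ∫ x in Set.Ioi (0:ℝ), Real.exp (-a*x^2) := by
    rw [← MeasureTheory.setIntegral_union (Set.Ioc_disjoint_Ioi le_rfl) measurableSet_Ioi
      (gauss_a_integrable ha).integrableOn (gauss_a_integrable ha).integrableOn]
    rw [Set.Ioc_union_Ioi_eq_Ioi hc.le]
  rw [intervalIntegral.integral_of_le hc.le]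
  rw [← integral_gaussian_Ioi a]
  linarith

lemma gauss_tail_nonneg {a c : ℝ} : 0 ≤ ∫ x in Set.Ioi c, Real.exp (-a*x^2) :=
  MeasureTheory.setIntegral_nonneg measurableSet_Ioi (fun x _ => (Real.exp_pos _).le)

lemma ftc_piece {a : ℝ} (c : ℝ) :
    (∫ x in (0:ℝ)..c, (1-2*a*x^2) * Real.exp (-a*x^2)) = c * Real.exp (-a*c^2) := by
  have hderiv : ∀ x ∈ Set.uIcc (0:ℝ) c, HasDerivAt (fun x => x * Real.exp (-a*x^2))
      ((1-2*a*x^2) * Real.exp (-a*x^2)) x := by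
    intro x _
    have h1 : HasDerivAt (fun x : ℝ => -a*x^2) (-a*(2*x)) x := by
      simpa using ((hasDerivAt_pow 2 x).const_mul (-a))
    have h2 := ((hasDerivAt_id x).mul h1.exp)
    exact h2.congr_deriv (by simp; ring)
  have hcont : IntervalIntegrable (fun x => (1-2*a*x^2) * Real.exp (-a*x^2)) volume 0 c :=
    (by fun_prop : Continuous fun x : ℝ => (1-2*a*x^2) * Real.exp (-a*x^2)).intervalIntegrable _ _
  have := intervalIntegral.integral_eq_sub_of_hasDerivAt hderiv hcont
  rw [this]
  simp

lemma key_lower {a : ℝ} (ha : 0 < a) :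
    (1 - 1/(2*a)) * (Real.sqrt (π/a)/2)
      ≤ ∫ x in (0:ℝ)..(π/2), (1-x^2) * Real.exp (-a*x^2) := by
  set c : ℝ := π/2 with hcdef
  have hc : 0 < c := by positivity
  have hc32 : (3:ℝ)/2 ≤ c := by
    have := Real.pi_gt_three
    rw [hcdef]; linarith
  set S : ℝ := Real.sqrt (π/a)/2 with hSdef
  set T : ℝ := ∫ x in Set.Ioi c, Real.exp (-a*x^2) with hTdef
  set E : ℝ := Real.exp (-a*c^2) with hEdef
  have hIc : (∫ x in (0:ℝ)..c, Real.exp (-a*x^2)) = S - T := gauss_Ic_split ha hc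
  have hT0 : 0 ≤ T := gauss_tail_nonneg
  have hT1 : T ≤ E/(a*c) := gauss_tail ha hc
  have hE : 0 < E := Real.exp_pos _
  have hdecomp : (∫ x in (0:ℝ)..c, (1-x^2) * Real.exp (-a*x^2))
      = (1 - 1/(2*a)) * (S - T) + (1/(2*a)) * (c * E) := by
    have hpt : ∀ x : ℝ, (1-x^2) * Real.exp (-a*x^2)
        = (1 - 1/(2*a)) * Real.exp (-a*x^2)
          + (1/(2*a)) * ((1-2*a*x^2) * Real.exp (-a*x^2)) := by
      intro x
      field_simp
      ring
    rw [intervalIntegral.integral_congr (fun x _ => hpt x)]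
    rw [intervalIntegral.integral_add
      (((by fun_prop : Continuous fun x : ℝ => (1 - 1/(2*a)) * Real.exp (-a*x^2))).intervalIntegrable _ _)
      (((by fun_prop : Continuous fun x : ℝ => (1/(2*a)) * ((1-2*a*x^2) * Real.exp (-a*x^2)))).intervalIntegrable _ _)]
    rw [intervalIntegral.integral_const_mul, intervalIntegral.integral_const_mul,
      hIc, ftc_piece c]
  rw [hdecomp]
  rcases le_or_gt (2*a) 1 with hsmall | hbig
  · have hβ : 1 - 1/(2*a) ≤ 0 := by
      have h2a : 0 < 2*a := by positivity
      rw [sub_nonpos, le_div_iff₀ h2a]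
      linarith
    have h1 : (1 - 1/(2*a)) * (S - T) ≥ (1 - 1/(2*a)) * S := by
      nlinarith
    nlinarith [mul_pos hc hE, mul_pos ha hc]
  · have hβ0 : 0 ≤ 1 - 1/(2*a) := by
      have h2a : (0:ℝ) < 2*a := by positivity
      rw [sub_nonneg, div_le_one h2a]
      linarith
    have hβ1 : 1 - 1/(2*a) ≤ 1 := by
      have h2a : (0:ℝ) < 2*a := by positivity
      have : 0 < 1/(2*a) := by positivity
      linarith
    have hTE : T ≤ E/(a*c) := hT1
    have hac : 0 < a*c := by positivity
    -- (1-1/(2a))(S-T) + cE/(2a) ≥ (1-1/(2a))S  ⇔ cE/(2a) ≥ (1-1/(2a))T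
    have h2 : (1 - 1/(2*a))*T ≤ T := by nlinarith
    have h3 : T ≤ E/(a*c) := hTE
    have h4 : E/(a*c) ≤ (1/(2*a)) * (c*E) := by
      rw [div_le_iff₀ hac]
      have : (1/(2*a)) * (c*E) * (a*c) = E * (c^2/2) := by field_simp
      rw [this]
      have hcsq : (1:ℝ) ≤ c^2/2 := by nlinarith
      nlinarith [mul_le_mul_of_nonneg_left hcsq hE.le]
    nlinarith

lemma gR_pointwise (R : ℝ) (x : ℝ) :
    (1-x^2) * Real.exp (-R^2*x^2) ≤ gR R x := by
  unfold gR
  have hexp : Real.exp (-R^2*x^2) ≤ Real.exp (-R^2 * Real.sin x ^ 2) := by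
    apply Real.exp_le_exp.2
    nlinarith [Real.sin_sq_le_sq (x := x), sq_nonneg R]
  rcases le_or_gt (1-x^2) 0 with hneg | hpos
  · have : 0 ≤ Real.cos x ^ 2 * Real.exp (-R^2 * Real.sin x ^ 2) := by positivity
    nlinarith [Real.exp_pos (-R^2*x^2)]
  · have hx1 : x^2 < 1 := by linarith
    have hcos : 1 - x^2/2 ≤ Real.cos x := Real.one_sub_sq_div_two_le_cos
    have hcos0 : 0 ≤ 1 - x^2/2 := by nlinarith
    have hcsq : 1 - x^2 ≤ Real.cos x ^ 2 := by nlinarith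
    calc (1-x^2) * Real.exp (-R^2*x^2)
        ≤ (1-x^2) * Real.exp (-R^2 * Real.sin x ^ 2) := by
          apply mul_le_mul_of_nonneg_left hexp hpos.le
      _ ≤ Real.cos x ^ 2 * Real.exp (-R^2 * Real.sin x ^ 2) := by
          apply mul_le_mul_of_nonneg_right hcsq (Real.exp_pos _).le

lemma quarter_lower (R : ℝ) (hR : 0 < R) :
    (1 - 1/(2*R^2)) * (Real.sqrt (π/R^2)/2) ≤ ∫ x in (0:ℝ)..(π/2), gR R x := by
  have ha : (0:ℝ) < R^2 := by positivity
  refine (key_lower ha).trans ?_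
  apply intervalIntegral.integral_mono_on (by positivity)
    ((by fun_prop : Continuous fun x : ℝ => (1-x^2) * Real.exp (-R^2*x^2)).intervalIntegrable _ _)
    ((gR_cont R).intervalIntegrable _ _)
  exact fun x _ => gR_pointwise R x

lemma m_lower (R : ℝ) (hR : 0 < R) :
    1 - 1/(2*R^2) ≤ (R / Real.sqrt (4*π)) * ∫ φ in (-π)..π, gR R φ := by
  have h4π : Real.sqrt (4*π) = 2 * Real.sqrt π := by
    rw [show (4:ℝ)*π = 2^2*π by ring, Real.sqrt_mul (by positivity), Real.sqrt_sq (by norm_num)]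
  have hπR : Real.sqrt (π/R^2) = Real.sqrt π / R := by
    rw [Real.sqrt_div pi_pos.le, Real.sqrt_sq hR.le]
  have hq := quarter_lower R hR
  rw [gR_full R, h4π]
  rw [hπR] at hq
  have hsπ : 0 < Real.sqrt π := Real.sqrt_pos.2 pi_pos
  have hcoef : 0 < R / (2 * Real.sqrt π) := by positivity
  calc 1 - 1/(2*R^2)
      = (R / (2 * Real.sqrt π)) * (4 * ((1 - 1/(2*R^2)) * (Real.sqrt π / R / 2))) := by
        field_simp
        ring
    _ ≤ (R / (2 * Real.sqrt π)) * (4 * ∫ x in (0:ℝ)..(π/2), gR R x) := by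
        apply mul_le_mul_of_nonneg_left _ hcoef.le
        apply mul_le_mul_of_nonneg_left _ (by norm_num)
        exact hq


lemma besselI0_ge (α : ℝ) (hα : 0 ≤ α) : Real.exp (-α) ≤ besselI0 α := by
  unfold besselI0
  have hmono : ∀ θ ∈ Set.Icc (-π) π, Real.exp (-α) ≤ Real.exp (α * Real.cos θ) := by
    intro θ _
    apply Real.exp_le_exp.2
    nlinarith [Real.neg_one_le_cos θ]
  have h := intervalIntegral.integral_mono_on (by linarith [pi_pos] : -π ≤ π)
    (_root_.intervalIntegrable_const (c := Real.exp (-α)) (μ := volume)) ((by fun_prop : Continuous fun θ : ℝ =>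
      Real.exp (α * Real.cos θ)).intervalIntegrable _ _) hmono
  rw [intervalIntegral.integral_const] at h
  have hπ : 0 < π := pi_pos
  have : (π - -π) • Real.exp (-α) = 2*π*Real.exp (-α) := by
    simp [smul_eq_mul]; ring
  rw [this] at h
  have h2π : (0:ℝ) < 2*π := by linarith
  calc Real.exp (-α) = (1/(2*π)) * (2*π*Real.exp (-α)) := by field_simp
    _ ≤ (1/(2*π)) * ∫ θ in (-π)..π, Real.exp (α * Real.cos θ) := by
        apply mul_le_mul_of_nonneg_left h (by positivity)

lemma besselI0_pos (α : ℝ) (hα : 0 ≤ α) : 0 < besselI0 α :=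
  lt_of_lt_of_le (Real.exp_pos _) (besselI0_ge α hα)

lemma besselI0_le (α : ℝ) (hα : 0 < α) :
    besselI0 α ≤ (1/(2*π)) * (Real.exp α * Real.sqrt (π/(2*α/π^2))) := by
  unfold besselI0
  have hπ : 0 < π := pi_pos
  set b : ℝ := 2*α/π^2 with hbdef
  have hb : 0 < b := by positivity
  have hmono : ∀ θ ∈ Set.Icc (-π) π, Real.exp (α * Real.cos θ)
      ≤ Real.exp α * Real.exp (-b*θ^2) := by
    intro θ hθ
    have habs : |θ| ≤ π := abs_le.2 ⟨hθ.1, hθ.2⟩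
    have hcos := Real.cos_le_one_sub_mul_cos_sq habs
    rw [← Real.exp_add]
    apply Real.exp_le_exp.2
    have := mul_le_mul_of_nonneg_left hcos hα.le
    calc α * Real.cos θ ≤ α * (1 - 2/π^2*θ^2) := this
      _ = α + -b*θ^2 := by rw [hbdef]; ring
  have h1 : (∫ θ in (-π)..π, Real.exp (α * Real.cos θ))
      ≤ ∫ θ in (-π)..π, Real.exp α * Real.exp (-b*θ^2) := by
    apply intervalIntegral.integral_mono_on (by linarith)
      ((by fun_prop : Continuous fun θ : ℝ => Real.exp (α * Real.cos θ)).intervalIntegrable _ _)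
      ((by fun_prop : Continuous fun θ : ℝ => Real.exp α * Real.exp (-b*θ^2)).intervalIntegrable _ _)
      hmono
  have h2 : (∫ θ in (-π)..π, Real.exp α * Real.exp (-b*θ^2))
      ≤ Real.exp α * Real.sqrt (π/b) := by
    rw [intervalIntegral.integral_const_mul]
    apply mul_le_mul_of_nonneg_left _ (Real.exp_pos α).le
    rw [intervalIntegral.integral_of_le (by linarith)]
    calc (∫ θ in Set.Ioc (-π) π, Real.exp (-b*θ^2))
        ≤ ∫ θ : ℝ, Real.exp (-b*θ^2) := by
          apply MeasureTheory.setIntegral_le_integral (gauss_a_integrable hb)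
          filter_upwards with x using (Real.exp_pos _).le
      _ = Real.sqrt (π/b) := integral_gaussian b
  have h2π : (0:ℝ) < 2*π := by linarith
  apply mul_le_mul_of_nonneg_left (h1.trans h2) (by positivity)

lemma log_besselI0_le (α : ℝ) (hα : 0 < α) :
    Real.log (besselI0 α) ≤ α + (1/2)*(3*Real.log π - Real.log 2 - Real.log α)
      - (Real.log 2 + Real.log π) := by
  have hπ : (0:ℝ) < π := pi_pos
  have hb : (0:ℝ) < 2*α/π^2 := by positivity
  have h1 := besselI0_le α hα
  have hpos := besselI0_pos α hα.le
  have hbound : (0:ℝ) < (1/(2*π)) * (Real.exp α * Real.sqrt (π/(2*α/π^2))) := by positivity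
  have hlog := Real.log_le_log hpos h1
  have heq : Real.log ((1/(2*π)) * (Real.exp α * Real.sqrt (π/(2*α/π^2))))
      = α + (1/2)*(3*Real.log π - Real.log 2 - Real.log α) - (Real.log 2 + Real.log π) := by
    rw [Real.log_mul (by positivity) (by positivity),
      Real.log_mul (by positivity) (by positivity), Real.log_exp,
      Real.log_sqrt (by positivity)]
    have hfrac : π/(2*α/π^2) = π^3/(2*α) := by field_simp
    have e1 : Real.log (π^3/(2*α)) = 3*Real.log π - (Real.log 2 + Real.log α) := by
      rw [Real.log_div (by positivity) (by positivity), Real.log_pow,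
        Real.log_mul (by norm_num) hα.ne']
      push_cast; ring
    have e2 : Real.log (2*π) = Real.log 2 + Real.log π :=
      Real.log_mul (by norm_num) hπ.ne'
    rw [hfrac, one_div, Real.log_inv, e2, e1]
    ring
  linarith [heq ▸ hlog]


/-- Lemma 2 of the paper (analytic content): with `m(R)` the mean cosine of the
phase error, `−log I₀(R²) + R² m(R) ≥ (1/2) log R² − 1`. -/
theorem tikhonov_lower_bound (R : ℝ) (hR : 0 < R)
    (pΦ : ℝ → ℝ)
    (hpΦ : ∀ φ : ℝ, pΦ φ =
      (1 / (2 * π)) * Real.exp (-R ^ 2) +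
      (R / Real.sqrt (4 * π)) * Real.cos φ * Real.exp (-R ^ 2 * Real.sin φ ^ 2) *
        erfc (-(R * Real.cos φ)))
    (m : ℝ) (hm : m = ∫ φ in (-π)..π, Real.cos φ * pΦ φ) :
    -Real.log (besselI0 (R ^ 2)) + R ^ 2 * m ≥ (1 / 2) * Real.log (R ^ 2) - 1 := by
  have hα : (0:ℝ) < R^2 := by positivity
  -- m in closed form
  have hm2 : m = (R / Real.sqrt (4 * π)) * ∫ φ in (-π)..π, gR R φ := by
    rw [hm, ← m_val R]
    exact intervalIntegral.integral_congr (fun φ _ => by rw [hpΦ φ])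
  have hmlow : 1 - 1/(2*R^2) ≤ m := by
    rw [hm2]; exact m_lower R hR
  have hm3 : R^2 - 1/2 ≤ R^2 * m := by
    have := mul_le_mul_of_nonneg_left hmlow (le_of_lt hα)
    calc R^2 - 1/2 = R^2 * (1 - 1/(2*R^2)) := by field_simp
      _ ≤ R^2 * m := this
  have hlog := log_besselI0_le (R^2) hα
  have hππ : Real.log π ≤ 3 * Real.log 2 := by
    have h8 : (π:ℝ) ≤ 8 := by linarith [pi_le_four]
    have := Real.log_le_log pi_pos h8
    rw [show (8:ℝ) = 2^3 by norm_num, Real.log_pow] at this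
    push_cast at this
    linarith
  linarith
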